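/- arXiv:1902.02935 — 6 statements merged into one kernel-verified Lean document; each statement's English description precedes it below -/
import Mathlib

section
/- In a rent division economy with quasi-linear preferences, if an envy-free allocation exists with assignment σ, then σ maximizes the total value Σ_i v_{iσ(i)} over all bijections from agents to rooms. -/
/-! Summing each agent's envy-freeness inequality against the room assigned by `γ` gives
`∑ v i (γ i) - ∑ r (γ i) ≤ ∑ v i (σ i) - ∑ r (σ i)`, and both rent totals are the sum of all
rents, since `γ` and `σ` are bijections. -/

theorem sum_comp_equiv_eq_sum_comp_equiv {ι α M : Type*} [Fintype ι] [AddCommMonoid M]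
    (r : α → M) (σ γ : ι ≃ α) : ∑ i, r (γ i) = ∑ i, r (σ i) :=
  Fintype.sum_equiv (γ.trans σ.symm) _ _ fun i => by simp

theorem sum_value_le_of_envyFree {ι α M : Type*} [Fintype ι] [AddCommGroup M] [PartialOrder M]
    [IsOrderedAddMonoid M] (v : ι → α → M) (r : α → M) (σ γ : ι ≃ α)
    (hEF : ∀ i j, v i (σ j) - r (σ j) ≤ v i (σ i) - r (σ i)) :
    ∑ i, v i (γ i) ≤ ∑ i, v i (σ i) := by
  have hutil : ∑ i, (v i (γ i) - r (γ i)) ≤ ∑ i, (v i (σ i) - r (σ i)) :=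
    Finset.sum_le_sum fun i _ => by simpa using hEF i (σ.symm (γ i))
  rwa [Finset.sum_sub_distrib, Finset.sum_sub_distrib, sum_comp_equiv_eq_sum_comp_equiv r σ γ,
    sub_le_sub_iff_right] at hutil

theorem stmt_1_general (n : ℕ) (v : Fin n → Fin n → ℝ) (σ : Equiv.Perm (Fin n))
    (r : Fin n → ℝ)
    (hEF : ∀ i j : Fin n, v i (σ j) - r (σ j) ≤ v i (σ i) - r (σ i)) :
    ∀ γ : Equiv.Perm (Fin n), ∑ i, v i (γ i) ≤ ∑ i, v i (σ i) :=
  fun γ => sum_value_le_of_envyFree v r σ γ hEF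

/-- If an envy-free allocation exists with assignment `σ` in a
quasi-linear economy, then `σ` maximizes total value over all bijections. -/
theorem stmt_1 (n : ℕ) (v : Fin n → Fin n → ℝ) (σ : Equiv.Perm (Fin n))
    (r : Fin n → ℝ) (m : ℝ) (hsum : ∑ a, r a = m)
    (hEF : ∀ i j : Fin n, v i (σ j) - r (σ j) ≤ v i (σ i) - r (σ i)) :
    ∀ γ : Equiv.Perm (Fin n), ∑ i, v i (γ i) ≤ ∑ i, v i (σ i) :=
  stmt_1_general n v σ r hEF
end

section
/- In a quasi-linear rent division economy, if (r, σ) and (t, μ) are both envy-free allocations for the same total rent m, then (t, σ) is also envy-free, and moreover every agent is indifferent between her bundle under μ and her bundle under σ at prices t: v_{iμ(i)} - t_{μ(i)} = v_{iσ(i)} - t_{σ(i)} for all i. -/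
/-!
An envy-free allocation `(p, σ)` maximizes total welfare `∑ i, v i (σ i)` over all assignments,
whatever its prices: summing each agent's preference for her own room over the room another
assignment gives her, the prices cancel because both assignments use every room once. So if
`(r, σ)` and `(t, μ)` are both envy-free, the two assignments have equal welfare. At prices `t`
every agent weakly prefers her `μ`-room to her `σ`-room, and as the utility sums agree, all
these inequalities are equalities; hence `(t, σ)` inherits envy-freeness from `(t, μ)`.
-/

open Finset

variable {ι α : Type*}

def IsEnvyFree (v : ι → α → ℝ) (p : α → ℝ) (σ : ι → α) : Prop :=
  ∀ i j, v i (σ j) - p (σ j) ≤ v i (σ i) - p (σ i)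

theorem Equiv.sum_comp_eq_sum_comp [Fintype ι] {M : Type*} [AddCommMonoid M] (f : α → M)
    (σ μ : ι ≃ α) :
    ∑ i, f (μ i) = ∑ i, f (σ i) := by
  simpa using Equiv.sum_comp (μ.trans σ.symm) (fun j => f (σ j))

namespace IsEnvyFree

variable {v : ι → α → ℝ} {p : α → ℝ}

theorem utility_le {σ : ι → α} (h : IsEnvyFree v p σ) (hσ : Function.Surjective σ)
    (μ : ι → α) (i : ι) : v i (μ i) - p (μ i) ≤ v i (σ i) - p (σ i) := by
  obtain ⟨j, hj⟩ := hσ (μ i)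
  simpa [hj] using h i j

theorem sum_utility_le [Fintype ι] {σ : ι ≃ α} (h : IsEnvyFree v p σ) (μ : ι → α) :
    ∑ i, (v i (μ i) - p (μ i)) ≤ ∑ i, (v i (σ i) - p (σ i)) :=
  sum_le_sum fun i _ => h.utility_le σ.surjective μ i

theorem welfare_le [Fintype ι] {σ : ι ≃ α} (h : IsEnvyFree v p σ) (μ : ι ≃ α) :
    ∑ i, v i (μ i) ≤ ∑ i, v i (σ i) := by
  have := h.sum_utility_le μ
  rwa [sum_sub_distrib, sum_sub_distrib, Equiv.sum_comp_eq_sum_comp p σ μ, sub_le_sub_iff_right]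
    at this

theorem utility_eq [Fintype ι] {r t : α → ℝ} {σ μ : ι ≃ α} (hσ : IsEnvyFree v r σ)
    (hμ : IsEnvyFree v t μ) (i : ι) : v i (μ i) - t (μ i) = v i (σ i) - t (σ i) := by
  have hle : ∀ k ∈ univ, v k (σ k) - t (σ k) ≤ v k (μ k) - t (μ k) :=
    fun k _ => hμ.utility_le μ.surjective σ k
  have hsum : ∑ k, (v k (σ k) - t (σ k)) = ∑ k, (v k (μ k) - t (μ k)) := by
    refine le_antisymm (sum_le_sum hle) ?_
    rw [sum_sub_distrib, sum_sub_distrib, Equiv.sum_comp_eq_sum_comp t σ μ]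
    linarith [hσ.welfare_le μ]
  exact ((sum_eq_sum_iff_of_le hle).mp hsum i (mem_univ i)).symm

theorem of_utility_eq {σ μ : ι → α} (hμ : IsEnvyFree v p μ) (hμs : Function.Surjective μ)
    (heq : ∀ i, v i (μ i) - p (μ i) = v i (σ i) - p (σ i)) : IsEnvyFree v p σ := fun i j =>
  (hμ.utility_le hμs (fun _ => σ j) i).trans_eq (heq i)

end IsEnvyFree

theorem stmt_2_general (n : ℕ) (v : Fin n → Fin n → ℝ)
    (r t : Fin n → ℝ) (σ μ : Equiv.Perm (Fin n))
    (hEFr : ∀ i j : Fin n, v i (σ j) - r (σ j) ≤ v i (σ i) - r (σ i))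
    (hEFt : ∀ i j : Fin n, v i (μ j) - t (μ j) ≤ v i (μ i) - t (μ i)) :
    (∀ i j : Fin n, v i (σ j) - t (σ j) ≤ v i (σ i) - t (σ i)) ∧
      ∀ i : Fin n, v i (μ i) - t (μ i) = v i (σ i) - t (σ i) := by
  have hσ : IsEnvyFree v r σ := hEFr
  have hμ : IsEnvyFree v t μ := hEFt
  have heq := hσ.utility_eq hμ
  exact ⟨hμ.of_utility_eq μ.surjective heq, heq⟩

/-- If `(r, σ)` and `(t, μ)` are both envy-free for the same total
rent `m` in a quasi-linear economy, then `(t, σ)` is envy-free and every agent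
is indifferent between her bundle under `μ` and under `σ` at prices `t`. -/
theorem stmt_2 (n : ℕ) (v : Fin n → Fin n → ℝ) (m : ℝ)
    (r t : Fin n → ℝ) (σ μ : Equiv.Perm (Fin n))
    (hr : ∑ a, r a = m) (ht : ∑ a, t a = m)
    (hEFr : ∀ i j : Fin n, v i (σ j) - r (σ j) ≤ v i (σ i) - r (σ i))
    (hEFt : ∀ i j : Fin n, v i (μ j) - t (μ j) ≤ v i (μ i) - t (μ i)) :
    (∀ i j : Fin n, v i (σ j) - t (σ j) ≤ v i (σ i) - t (σ i)) ∧
      ∀ i : Fin n, v i (μ i) - t (μ i) = v i (σ i) - t (σ i) :=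
  stmt_2_general n v r t σ μ hEFr hEFt
end

section
/- (Converse Perturbation Lemma) Let u ∈ B^N, ε > 0, (r, σ) envy-free for rent m and (t, σ) envy-free for rent m − ε with r_a > t_a for every room a. If the set of binding/violated budget pairs is the same at r and t, i.e., B^u(r) = B^u(t) where B^u(s) = {(i, a) : s_a ≥ b_i}, then σ is a maximum-weight perfect matching in F^u(r). -/
/-!
Write `δ_a = r_a - t_a > 0`. Because no budget threshold lies between `t_a` and `r_a`, each
`u_i(·, a)` is affine on `[t_a, r_a]` with slope `-λ_{ia}`, so
`u_i(t_a, a) = u_i(r_a, a) + λ_{ia} δ_a`. For a perfect matching `γ` of the indifference graph,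
envy-freeness of `(t, σ)` then gives `λ_{iγ(i)} δ_{γ(i)} ≤ λ_{iσ(i)} δ_{σ(i)}` for every agent `i`.
After taking logarithms, `log δ` is a potential on the rooms, which cancels when summed over any
perfect matching.
-/

open Finset Real

theorem Equiv.Perm.sum_le_sum_of_add_potential_le {ι M : Type*} [Fintype ι] [AddCommMonoid M]
    [PartialOrder M] [IsOrderedCancelAddMonoid M] (w : ι → ι → M) (d : ι → M)
    (σ γ : Equiv.Perm ι) (h : ∀ i, w i (γ i) + d (γ i) ≤ w i (σ i) + d (σ i)) :
    ∑ i, w i (γ i) ≤ ∑ i, w i (σ i) := by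
  have hsum := sum_le_sum fun i (_ : i ∈ univ) => h i
  rw [sum_add_distrib, sum_add_distrib, Equiv.sum_comp γ d, Equiv.sum_comp σ d] at hsum
  exact le_of_add_le_add_right hsum

theorem budget_utility_eq_add_slope_mul {v ρ b p q : ℝ} (hqp : q < p)
    (hB : b ≤ p ↔ b ≤ q) :
    v - q - ρ * max 0 (q - b) =
      v - p - ρ * max 0 (p - b) + (if b < p then 1 + ρ else 1) * (p - q) := by
  rcases lt_or_ge b p with hbp | hpb
  · have hbq : b ≤ q := hB.1 hbp.le
    rw [if_pos hbp, max_eq_right (by linarith), max_eq_right (by linarith)]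
    ring
  · rw [if_neg (not_lt.2 hpb), max_eq_left (by linarith), max_eq_left (by linarith)]
    ring

theorem stmt_7_general (n : ℕ) (v : Fin n → Fin n → ℝ) (b ρ : Fin n → ℝ)
    (hρ : ∀ i, 0 ≤ ρ i)
    (u : Fin n → ℝ → Fin n → ℝ)
    (hu : ∀ i p a, u i p a = v i a - p - ρ i * max 0 (p - b i))
    (r t : Fin n → ℝ) (σ : Equiv.Perm (Fin n))
    (hEFt : ∀ i j : Fin n, u i (t (σ j)) (σ j) ≤ u i (t (σ i)) (σ i))
    (hrt : ∀ a, t a < r a)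
    (hB : ∀ i a, b i ≤ r a ↔ b i ≤ t a)
    (lam : Fin n → Fin n → ℝ)
    (hlam : ∀ i a, lam i a = if b i < r a then 1 + ρ i else 1) :
    ∀ γ : Equiv.Perm (Fin n),
      (∀ i, u i (r (γ i)) (γ i) = u i (r (σ i)) (σ i)) →
      ∑ i, Real.log (lam i (γ i)) ≤ ∑ i, Real.log (lam i (σ i)) := by
  intro γ hγ
  have hlam_pos : ∀ i a, 0 < lam i a := fun i a => by
    rw [hlam]; split_ifs <;> linarith [hρ i]
  have hδ_pos : ∀ a, 0 < r a - t a := fun a => sub_pos.2 (hrt a)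
  have hu_t : ∀ i a, u i (t a) a = u i (r a) a + lam i a * (r a - t a) := fun i a => by
    rw [hu, hu, hlam]
    exact budget_utility_eq_add_slope_mul (hrt a) (hB i a)
  refine Equiv.Perm.sum_le_sum_of_add_potential_le (fun i a => log (lam i a))
    (fun a => log (r a - t a)) σ γ fun i => ?_
  have hEF_γ := hEFt i (σ.symm (γ i))
  rw [Equiv.apply_symm_apply] at hEF_γ
  rw [← log_mul (hlam_pos _ _).ne' (hδ_pos _).ne',
    ← log_mul (hlam_pos _ _).ne' (hδ_pos _).ne']
  refine log_le_log (mul_pos (hlam_pos _ _) (hδ_pos _)) ?_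
  linarith [hu_t i (γ i), hu_t i (σ i), hγ i]

/-- Converse Perturbation Lemma: in the budget-constrained
quasi-linear domain, if `(r, σ)` is envy-free for rent `m`, `(t, σ)` is
envy-free for rent `m - ε` with `t_a < r_a` everywhere, and the budget regimes
agree (`B^u(r) = B^u(t)`), then `σ` is a maximum-weight perfect matching in the
weighted indifference graph `F^u(r)`. -/
theorem stmt_7 (n : ℕ) (v : Fin n → Fin n → ℝ) (b ρ : Fin n → ℝ)
    (hb : ∀ i, 0 ≤ b i) (hρ : ∀ i, 0 ≤ ρ i)
    (u : Fin n → ℝ → Fin n → ℝ)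
    (hu : ∀ i p a, u i p a = v i a - p - ρ i * max 0 (p - b i))
    (r t : Fin n → ℝ) (σ : Equiv.Perm (Fin n)) (m ε : ℝ) (hε : 0 < ε)
    (hrsum : ∑ a, r a = m) (htsum : ∑ a, t a = m - ε)
    (hEFr : ∀ i j : Fin n, u i (r (σ j)) (σ j) ≤ u i (r (σ i)) (σ i))
    (hEFt : ∀ i j : Fin n, u i (t (σ j)) (σ j) ≤ u i (t (σ i)) (σ i))
    (hrt : ∀ a, t a < r a)
    (hB : ∀ i a, b i ≤ r a ↔ b i ≤ t a)
    (lam : Fin n → Fin n → ℝ)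
    (hlam : ∀ i a, lam i a = if b i < r a then 1 + ρ i else 1) :
    ∀ γ : Equiv.Perm (Fin n),
      (∀ i, u i (r (γ i)) (γ i) = u i (r (σ i)) (σ i)) →
      ∑ i, Real.log (lam i (γ i)) ≤ ∑ i, Real.log (lam i (σ i)) :=
  stmt_7_general n v b ρ hρ u hu r t σ hEFt hrt hB lam hlam
end

section
/- (Bounded rent-flow under budget-constrained preferences) There exists a constant θ > 0, depending only on n and the maximal budget violation index ρ̄, such that for any subset M of agents with |M| rooms C, budget-constrained preferences u ∈ B(C)^M with indices ρ_i ≤ ρ̄, any room a ∈ C, any ε > 0, any allocation (t, σ) maximizing the price of room a over envy-free allocations with total rent l, and any allocation (r, μ) maximizing the price of room a over envy-free allocations with total rent l + ε: r_a − t_a ≥ θ·ε. In fact one may take θ = 1/(n(1 + ρ̄)^{n²}). -/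
/-!
Starting from any envy-free allocation `(t, σ)`, the total rent can be raised by `ε` while staying
envy-free and letting room `a` absorb a fixed share of the increase; the allocation maximizing the
price of `a` at rent `l + ε` does at least as well.

Locally, choose among the envy-free assignments at the current prices one minimizing the product
of the agents' marginal money costs (`slope`). Along any cycle of indifferences, rotating the
occupants stays envy-free, so by minimality the ratios of marginal costs multiply to at most one
around the cycle. Hence the largest ratio product along an indifference path from `a` (the
`potential`) is a bounded, `≤ (1 + ρ̄)^(m-1)`, direction of price increase that preserves every
indifference to first order, and `a` gets at least `1/(m(1 + ρ̄)^(m-1))` of it. A compactness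
argument chains these local steps up to a total increase of `ε`.
-/

namespace RentFlow

open Filter Topology

section ChainProd

variable {α : Type*}

def chainProd {M : Type*} [CommMonoid M] (w : α → α → M) (l : List α) : M :=
  (List.zipWith w l l.tail).prod

section CommMonoid

variable {M : Type*} [CommMonoid M] (w : α → α → M)

@[simp] lemma chainProd_nil : chainProd w [] = 1 := rfl

@[simp] lemma chainProd_singleton (x : α) : chainProd w [x] = 1 := rfl

@[simp] lemma chainProd_cons_cons (x y : α) (l : List α) :
    chainProd w (x :: y :: l) = w x y * chainProd w (y :: l) := by
  simp [chainProd]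

lemma chainProd_append_cons (s t : List α) (y : α) :
    chainProd w (s ++ y :: t) = chainProd w (s ++ [y]) * chainProd w (y :: t) := by
  induction s with
  | nil => simp
  | cons x s ih =>
    cases s with
    | nil => simp
    | cons x' s =>
      simp only [List.cons_append] at ih ⊢
      simp [ih, mul_assoc]

lemma chainProd_concat (s : List α) (x y : α) :
    chainProd w (s ++ [x, y]) = chainProd w (s ++ [x]) * w x y := by
  simpa using chainProd_append_cons w s [y] x

end CommMonoid

variable {R : Type*} [CommSemiring R] [PartialOrder R] [IsStrictOrderedRing R] {w : α → α → R}

lemma chainProd_pos (hw : ∀ x y, 0 < w x y) : ∀ l : List α, 0 < chainProd w l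
  | [] | [_] => by simp
  | x :: y :: l => by
    rw [chainProd_cons_cons]
    exact mul_pos (hw x y) (chainProd_pos hw _)

lemma chainProd_le_pow {K : R} (hw : ∀ x y, 0 < w x y) (hK : ∀ x y, w x y ≤ K) :
    ∀ l : List α, chainProd w l ≤ K ^ (l.length - 1)
  | [] | [_] => by simp
  | x :: y :: l => by
    rw [chainProd_cons_cons, List.length_cons, Nat.add_sub_cancel, List.length_cons, pow_succ']
    exact mul_le_mul (hK x y) (chainProd_le_pow hw hK (y :: l)) (chainProd_pos hw _).le
      ((hw x y).le.trans (hK x y))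

end ChainProd

section FormPerm

variable {α : Type*}

lemma isChain_iff_forall_mem_zip_tail {R : α → α → Prop} {l : List α} :
    l.IsChain R ↔ ∀ p ∈ l.zip l.tail, R p.1 p.2 := by
  induction l with
  | nil => simp
  | cons x l ih =>
    cases l with
    | nil => simp
    | cons y l => simp [List.isChain_cons_cons, ih]

lemma zipWith_append_head_tail {β : Type*} (f : α → α → β) (y : α) (t : List α) :
    List.zipWith f (y :: t ++ [y]) (y :: t ++ [y]).tail =
      List.zipWith f (y :: t) ((y :: t).rotate 1) := by
  simpa using List.zipWith_append (f := f) (l₁' := [y]) (l₂' := [])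
    (show (y :: t).length = (t ++ [y]).length by simp)

variable [DecidableEq α]

lemma map_formPerm_eq_rotate_one {c : List α} (hc : c.Nodup) : c.map c.formPerm = c.rotate 1 := by
  refine List.ext_getElem (by simp) fun i _ _ => ?_
  simp only [List.getElem_map, List.formPerm_apply_getElem _ hc, List.getElem_rotate]

lemma rel_formPerm_of_isChain {R : α → α → Prop} (hR : ∀ x, R x x) {y : α} {t : List α}
    (hc : (y :: t).Nodup) (hchain : (y :: t ++ [y]).IsChain R) (z : α) :
    R z ((y :: t).formPerm z) := by
  by_cases hz : z ∈ y :: t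
  · rw [isChain_iff_forall_mem_zip_tail, List.zip, zipWith_append_head_tail,
      ← map_formPerm_eq_rotate_one hc, List.zipWith_map_right, List.zipWith_self] at hchain
    simpa using hchain _ (List.mem_map_of_mem hz)
  · rw [List.formPerm_apply_of_notMem hz]; exact hR z

variable [Fintype α] {M : Type*} [CommMonoid M]

lemma prod_formPerm_eq_chainProd (w : α → α → M) (hw : ∀ x, w x x = 1) {y : α} {t : List α}
    (hc : (y :: t).Nodup) :
    ∏ z, w z ((y :: t).formPerm z) = chainProd w (y :: t ++ [y]) := by
  rw [← Finset.prod_subset (Finset.subset_univ (y :: t).toFinset), List.prod_toFinset _ hc,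
    chainProd, zipWith_append_head_tail, ← map_formPerm_eq_rotate_one hc, List.zipWith_map_right,
    List.zipWith_self]
  intro z _ hz
  rw [List.formPerm_apply_of_notMem (by simpa using hz), hw]

end FormPerm

section Preferences

variable {α : Type*} (v : α → α → ℝ) (ρ b : α → ℝ)

def cost (i : α) (p : ℝ) : ℝ := p + ρ i * max 0 (p - b i)

def utility (i : α) (p : ℝ) (c : α) : ℝ := v i c - cost ρ b i p

/-- The right derivative of `cost ρ b i` at `p`. -/
noncomputable def slope (i : α) (p : ℝ) : ℝ := if b i ≤ p then 1 + ρ i else 1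

variable {v ρ b}

lemma cost_add_eventuallyEq (i : α) (p : ℝ) :
    (fun h => cost ρ b i (p + h)) =ᶠ[𝓝[≥] 0] fun h => cost ρ b i p + slope ρ b i p * h := by
  unfold cost slope
  split_ifs with hp
  · filter_upwards [self_mem_nhdsWithin] with h (hh : 0 ≤ h)
    rw [max_eq_right (by linarith), max_eq_right (by linarith)]
    ring
  · have : ∀ᶠ h in 𝓝[≥] (0 : ℝ), h < b i - p :=
      nhdsWithin_le_nhds (eventually_lt_nhds (by linarith))
    filter_upwards [this] with h hh
    rw [max_eq_left (by linarith), max_eq_left (by linarith)]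
    ring

lemma continuous_utility (i c : α) : Continuous fun p => utility v ρ b i p c := by
  unfold utility cost; fun_prop

variable {i : α}

lemma one_le_slope (hρ : 0 ≤ ρ i) (p : ℝ) : 1 ≤ slope ρ b i p := by
  unfold slope; split_ifs <;> linarith

lemma slope_pos (hρ : 0 ≤ ρ i) (p : ℝ) : 0 < slope ρ b i p :=
  one_pos.trans_le (one_le_slope hρ p)

lemma slope_le {ρbar : ℝ} (hρ : 0 ≤ ρ i) (hρbar : ρ i ≤ ρbar) (p : ℝ) :
    slope ρ b i p ≤ 1 + ρbar := by
  unfold slope; split_ifs <;> linarith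

end Preferences

section Assignment

variable {α : Type*} (v : α → α → ℝ) (ρ b : α → ℝ)

def EnvyFree (q : α → ℝ) (ν : Equiv.Perm α) : Prop :=
  ∀ i c, utility v ρ b i (q c) c ≤ utility v ρ b i (q (ν i)) (ν i)

noncomputable def slopeProd [Fintype α] (q : α → ℝ) (ν : Equiv.Perm α) : ℝ :=
  ∏ i, slope ρ b i (q (ν i))

def WeaklyEnvies (q : α → ℝ) (ν : Equiv.Perm α) (x y : α) : Prop :=
  utility v ρ b (ν.symm x) (q x) x ≤ utility v ρ b (ν.symm x) (q y) y

noncomputable def slopeRatio (q : α → ℝ) (ν : Equiv.Perm α) (x y : α) : ℝ :=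
  slope ρ b (ν.symm x) (q x) / slope ρ b (ν.symm x) (q y)

variable {v ρ b} {q : α → ℝ} {ν : Equiv.Perm α}

lemma weaklyEnvies_refl (x : α) : WeaklyEnvies v ρ b q ν x x := le_rfl

lemma EnvyFree.trans_perm (hν : EnvyFree v ρ b q ν) {π : Equiv.Perm α}
    (hπ : ∀ x, WeaklyEnvies v ρ b q ν x (π x)) : EnvyFree v ρ b q (ν.trans π) := fun i c => by
  have hi := hπ (ν i)
  rw [WeaklyEnvies, Equiv.symm_apply_apply] at hi
  exact (hν i c).trans hi

lemma slopeRatio_self (hρ : ∀ i, 0 ≤ ρ i) (x : α) : slopeRatio ρ b q ν x x = 1 :=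
  div_self (slope_pos (hρ _) _).ne'

lemma slopeRatio_pos (hρ : ∀ i, 0 ≤ ρ i) (x y : α) : 0 < slopeRatio ρ b q ν x y :=
  div_pos (slope_pos (hρ _) _) (slope_pos (hρ _) _)

lemma slopeRatio_le {ρbar : ℝ} (hρ : ∀ i, 0 ≤ ρ i) (hρbar : ∀ i, ρ i ≤ ρbar) (x y : α) :
    slopeRatio ρ b q ν x y ≤ 1 + ρbar :=
  div_le_of_le_mul₀ (slope_pos (hρ _) _).le (by linarith [hρ x, hρbar x])
    ((slope_le (hρ _) (hρbar _) _).trans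
      (le_mul_of_one_le_right (by linarith [hρ x, hρbar x]) (one_le_slope (hρ _) _)))

variable [Fintype α]

lemma slopeProd_pos (hρ : ∀ i, 0 ≤ ρ i) (ν : Equiv.Perm α) : 0 < slopeProd ρ b q ν :=
  Finset.prod_pos fun i _ => slope_pos (hρ i) _

lemma prod_slopeRatio_eq_div (π : Equiv.Perm α) :
    ∏ x, slopeRatio ρ b q ν x (π x) = slopeProd ρ b q ν / slopeProd ρ b q (ν.trans π) := by
  rw [slopeProd, slopeProd, ← Finset.prod_div_distrib, ← Equiv.prod_comp ν]
  simp [slopeRatio]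

lemma prod_slopeRatio_le_one (hρ : ∀ i, 0 ≤ ρ i) (hν : EnvyFree v ρ b q ν)
    (hmin : ∀ ν', EnvyFree v ρ b q ν' → slopeProd ρ b q ν ≤ slopeProd ρ b q ν')
    {π : Equiv.Perm α} (hπ : ∀ x, WeaklyEnvies v ρ b q ν x (π x)) :
    ∏ x, slopeRatio ρ b q ν x (π x) ≤ 1 := by
  rw [prod_slopeRatio_eq_div, div_le_one (slopeProd_pos hρ _)]
  exact hmin _ (hν.trans_perm hπ)

end Assignment

section Potential

variable {α : Type*} (v : α → α → ℝ) (ρ b q : α → ℝ) (ν : Equiv.Perm α)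

def IsEnvyPath (a x : α) (p : List α) : Prop :=
  p.Nodup ∧ p.head? = some a ∧ p.getLast? = some x ∧ p.IsChain (WeaklyEnvies v ρ b q ν)

/-- The largest product of slope ratios along a simple weak-envy path from `a` to `x`;
it is `sSup ∅ = 0` when there is no such path. -/
noncomputable def potential (a x : α) : ℝ :=
  sSup (chainProd (slopeRatio ρ b q ν) '' {p | IsEnvyPath v ρ b q ν a x p})

variable {v ρ b q ν} {ρbar : ℝ} {a : α}

lemma potential_nonneg (hρ : ∀ i, 0 ≤ ρ i) (x : α) : 0 ≤ potential v ρ b q ν a x :=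
  Real.sSup_nonneg (Set.forall_mem_image.2 fun p _ => (chainProd_pos (slopeRatio_pos hρ) p).le)

variable [Fintype α]

lemma chainProd_le_of_isEnvyPath (hρ : ∀ i, 0 ≤ ρ i) (hρbar : ∀ i, ρ i ≤ ρbar) {x : α}
    {p : List α} (hp : IsEnvyPath v ρ b q ν a x p) :
    chainProd (slopeRatio ρ b q ν) p ≤ (1 + ρbar) ^ (Fintype.card α - 1) :=
  (chainProd_le_pow (slopeRatio_pos hρ) (slopeRatio_le hρ hρbar) p).trans
    (pow_le_pow_right₀ (by linarith [hρ a, hρbar a]) (Nat.sub_le_sub_right hp.1.length_le_card 1))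

lemma bddAbove_potential (hρ : ∀ i, 0 ≤ ρ i) (hρbar : ∀ i, ρ i ≤ ρbar) (x : α) :
    BddAbove (chainProd (slopeRatio ρ b q ν) '' {p | IsEnvyPath v ρ b q ν a x p}) :=
  ⟨_, Set.forall_mem_image.2 fun _ hp => chainProd_le_of_isEnvyPath hρ hρbar hp⟩

lemma potential_le (hρ : ∀ i, 0 ≤ ρ i) (hρbar : ∀ i, ρ i ≤ ρbar) (x : α) :
    potential v ρ b q ν a x ≤ (1 + ρbar) ^ (Fintype.card α - 1) :=
  Real.sSup_le (Set.forall_mem_image.2 fun _ hp => chainProd_le_of_isEnvyPath hρ hρbar hp)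
    (pow_nonneg (by linarith [hρ a, hρbar a]) _)

lemma one_le_potential_self (hρ : ∀ i, 0 ≤ ρ i) (hρbar : ∀ i, ρ i ≤ ρbar) :
    1 ≤ potential v ρ b q ν a a :=
  le_csSup (bddAbove_potential hρ hρbar a)
    ⟨[a], ⟨List.nodup_singleton a, rfl, rfl, List.isChain_singleton a⟩, chainProd_singleton _ a⟩

variable [DecidableEq α]

/-- If `y` already lies on the path, the part of the path from `y` to `x` closes up into a cycle
of weak envy, whose slope ratios multiply to at most one. -/
lemma exists_isEnvyPath_mul_slopeRatio_le (hρ : ∀ i, 0 ≤ ρ i) (hν : EnvyFree v ρ b q ν)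
    (hmin : ∀ ν', EnvyFree v ρ b q ν' → slopeProd ρ b q ν ≤ slopeProd ρ b q ν')
    {x y : α} (hxy : WeaklyEnvies v ρ b q ν x y) {p : List α} (hp : IsEnvyPath v ρ b q ν a x p) :
    ∃ p', IsEnvyPath v ρ b q ν a y p' ∧
      chainProd (slopeRatio ρ b q ν) p * slopeRatio ρ b q ν x y ≤
        chainProd (slopeRatio ρ b q ν) p' := by
  obtain ⟨hnodup, hhead, hlast, hchain⟩ := hp
  by_cases hy : y ∈ p
  · obtain ⟨s, t, rfl⟩ := List.append_of_mem hy
    have hcyc_last : (y :: t).getLast? = some x := by simpa using hlast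
    obtain ⟨t', ht'⟩ := List.getLast?_eq_some_iff.1 hcyc_last
    have hcyc_nodup : (y :: t).Nodup := hnodup.sublist (List.sublist_append_right _ _)
    have hcyc_chain : (y :: t ++ [y]).IsChain (WeaklyEnvies v ρ b q ν) :=
      hchain.right_of_append.append (List.isChain_singleton y) (by simpa [hcyc_last] using hxy)
    have hcyc := prod_slopeRatio_le_one hρ hν hmin
      (rel_formPerm_of_isChain weaklyEnvies_refl hcyc_nodup hcyc_chain)
    rw [prod_formPerm_eq_chainProd _ (slopeRatio_self hρ) hcyc_nodup, ht', List.append_assoc,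
      List.singleton_append, chainProd_concat, ← ht'] at hcyc
    refine ⟨s ++ [y], ⟨hnodup.sublist (by simp), by simpa using hhead, by simp,
      hchain.prefix ⟨t, by simp⟩⟩, ?_⟩
    calc chainProd (slopeRatio ρ b q ν) (s ++ y :: t) * slopeRatio ρ b q ν x y
        = chainProd (slopeRatio ρ b q ν) (s ++ [y]) *
            (chainProd (slopeRatio ρ b q ν) (y :: t) * slopeRatio ρ b q ν x y) := by
          rw [chainProd_append_cons, mul_assoc]
      _ ≤ chainProd (slopeRatio ρ b q ν) (s ++ [y]) :=
          mul_le_of_le_one_right (chainProd_pos (slopeRatio_pos hρ) _).le hcyc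
  · obtain ⟨s, rfl⟩ := List.getLast?_eq_some_iff.1 hlast
    refine ⟨s ++ [x] ++ [y], ⟨?_, by simpa using hhead, by simp, ?_⟩, ?_⟩
    · exact hnodup.append (List.nodup_singleton y) (by simpa using hy)
    · exact hchain.append (List.isChain_singleton y) (by simpa using hxy)
    · rw [List.append_assoc, List.singleton_append, chainProd_concat]

lemma slope_mul_potential_le (hρ : ∀ i, 0 ≤ ρ i) (hρbar : ∀ i, ρ i ≤ ρbar)
    (hν : EnvyFree v ρ b q ν)
    (hmin : ∀ ν', EnvyFree v ρ b q ν' → slopeProd ρ b q ν ≤ slopeProd ρ b q ν')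
    {x y : α} (hxy : WeaklyEnvies v ρ b q ν x y) :
    slope ρ b (ν.symm x) (q x) * potential v ρ b q ν a x ≤
      slope ρ b (ν.symm x) (q y) * potential v ρ b q ν a y := by
  have hr := slopeRatio_pos (b := b) (q := q) (ν := ν) hρ x y
  suffices potential v ρ b q ν a x * slopeRatio ρ b q ν x y ≤ potential v ρ b q ν a y by
    rwa [slopeRatio, mul_div_assoc', div_le_iff₀ (slope_pos (hρ _) _), mul_comm,
      mul_comm (potential _ _ _ _ _ _ y)] at this
  rcases (chainProd (slopeRatio ρ b q ν) '' {p | IsEnvyPath v ρ b q ν a x p}).eq_empty_or_nonempty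
    with hempty | hne
  · rw [potential, hempty, Real.sSup_empty, zero_mul]
    exact potential_nonneg hρ y
  · rw [← le_div_iff₀ hr]
    refine csSup_le hne (Set.forall_mem_image.2 fun p hp => ?_)
    obtain ⟨p', hp', hle⟩ := exists_isEnvyPath_mul_slopeRatio_le hρ hν hmin hxy hp
    rw [le_div_iff₀ hr]
    exact hle.trans (le_csSup (bddAbove_potential hρ hρbar y) ⟨p', hp', rfl⟩)

end Potential

section Perturbation

variable {α : Type*} [Fintype α] {v : α → α → ℝ} {ρ b : α → ℝ} {ρbar : ℝ}

lemma isClosed_setOf_exists_envyFree :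
    IsClosed {q : α → ℝ | ∃ ν, EnvyFree v ρ b q ν} := by
  simp only [Set.ofPred_exists, EnvyFree, Set.ofPred_forall]
  exact isClosed_iUnion_of_finite fun ν => isClosed_iInter fun i => isClosed_iInter fun c =>
    isClosed_le ((continuous_utility i c).comp (continuous_apply c))
      ((continuous_utility i (ν i)).comp (continuous_apply (ν i)))

/-- Slack envy constraints survive small perturbations by continuity; on tight ones no kink of
the cost is crossed for small `γ`, so they survive when `d` satisfies the first-order condition. -/
lemma eventually_envyFree_add_smul {q d : α → ℝ} {ν : Equiv.Perm α} (hν : EnvyFree v ρ b q ν)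
    (hd : 0 ≤ d)
    (hslope : ∀ i c, utility v ρ b i (q c) c = utility v ρ b i (q (ν i)) (ν i) →
      slope ρ b i (q (ν i)) * d (ν i) ≤ slope ρ b i (q c) * d c) :
    ∀ᶠ γ in 𝓝[>] (0 : ℝ), EnvyFree v ρ b (q + γ • d) ν := by
  unfold EnvyFree
  simp only [Filter.eventually_all]
  intro i c
  rcases (hν i c).eq_or_lt with htight | hslack
  · have hcost : ∀ z, ∀ᶠ γ in 𝓝[>] (0 : ℝ),
        cost ρ b i (q z + γ * d z) = cost ρ b i (q z) + slope ρ b i (q z) * (γ * d z) := by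
      intro z
      have htends : Tendsto (fun γ : ℝ => γ * d z) (𝓝[>] 0) (𝓝[≥] 0) :=
        tendsto_nhdsWithin_iff.2
          ⟨((continuous_id.mul continuous_const).tendsto' 0 0 (by simp)).mono_left
            nhdsWithin_le_nhds,
          eventually_mem_nhdsWithin.mono fun γ (hγ : 0 < γ) => mul_nonneg hγ.le (hd z)⟩
      exact htends.eventually (cost_add_eventuallyEq i (q z))
    filter_upwards [hcost c, hcost (ν i), self_mem_nhdsWithin] with γ hc hνi (hγ : 0 < γ)
    have := mul_le_mul_of_nonneg_left (hslope i c htight) hγ.le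
    simp only [utility, Pi.add_apply, Pi.smul_apply, smul_eq_mul, hc, hνi] at htight ⊢
    nlinarith
  · have hcont : ∀ z, Continuous fun γ : ℝ => utility v ρ b i ((q + γ • d) z) z := fun z =>
      (continuous_utility i z).comp (by fun_prop)
    filter_upwards [eventually_nhdsWithin_of_eventually_nhds
      (((hcont c).tendsto 0).eventually_lt ((hcont (ν i)).tendsto 0) (by simpa using hslack))]
      with γ h using h.le

variable [DecidableEq α]

/-- Starting from a minimizer of the slope product, raise each price in proportion to its
potential. -/
lemma exists_envyFree_local_increase (hρ : ∀ i, 0 ≤ ρ i) (hρbar : ∀ i, ρ i ≤ ρbar) (a : α)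
    {q : α → ℝ} {σ : Equiv.Perm α} (hσ : EnvyFree v ρ b q σ) {δ : ℝ} (hδ : 0 < δ) :
    ∃ q' ν, EnvyFree v ρ b q' ν ∧ q ≤ q' ∧ ∑ c, q c < ∑ c, q' c ∧ ∑ c, q' c ≤ ∑ c, q c + δ ∧
      ∑ c, q' c - ∑ c, q c ≤
        Fintype.card α * (1 + ρbar) ^ (Fintype.card α - 1) * (q' a - q a) := by
  obtain ⟨ν, hν, hmin⟩ :=
    Set.exists_min_image {ν | EnvyFree v ρ b q ν} (slopeProd ρ b q) (Set.toFinite _) ⟨σ, hσ⟩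
  set d := potential v ρ b q ν a
  set D := (1 + ρbar) ^ (Fintype.card α - 1)
  have hd0 : 0 ≤ d := potential_nonneg hρ
  have hda : 1 ≤ d a := one_le_potential_self hρ hρbar
  have hsum_le : ∑ c, d c ≤ Fintype.card α * D :=
    calc ∑ c, d c ≤ ∑ _c : α, D := Finset.sum_le_sum fun x _ => potential_le hρ hρbar x
      _ = Fintype.card α * D := by simp
  have hsum_pos : 0 < ∑ c, d c :=
    one_pos.trans_le (hda.trans (Finset.single_le_sum (fun x _ => hd0 x) (Finset.mem_univ a)))
  have hEF := eventually_envyFree_add_smul hν hd0 fun i c h => by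
    simpa using slope_mul_potential_le hρ hρbar hν hmin (x := ν i) (y := c)
      (by simpa [WeaklyEnvies] using h.ge)
  have hsmall : ∀ᶠ γ in 𝓝[>] (0 : ℝ), γ * ∑ c, d c < δ :=
    eventually_nhdsWithin_of_eventually_nhds
      (((continuous_id.mul continuous_const).tendsto' 0 0 (by simp)).eventually
        (eventually_lt_nhds hδ))
  obtain ⟨γ, ⟨hEFγ, hγδ⟩, hγ : 0 < γ⟩ := ((hEF.and hsmall).and self_mem_nhdsWithin).exists
  have hsum : ∑ c, (q + γ • d) c = ∑ c, q c + γ * ∑ c, d c := by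
    simp [Finset.sum_add_distrib, Finset.mul_sum]
  refine ⟨q + γ • d, ν, hEFγ, le_add_of_nonneg_right (smul_nonneg hγ.le hd0), ?_, ?_, ?_⟩
  · rw [hsum]; nlinarith
  · rw [hsum]; linarith
  · rw [hsum]
    simp only [Pi.add_apply, Pi.smul_apply, smul_eq_mul, add_sub_cancel_left]
    have hD : 0 ≤ (Fintype.card α : ℝ) * D := hsum_pos.le.trans hsum_le
    calc γ * ∑ c, d c ≤ γ * (Fintype.card α * D) := mul_le_mul_of_nonneg_left hsum_le hγ.le
      _ ≤ Fintype.card α * D * (γ * d a) := by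
        nlinarith [mul_le_mul_of_nonneg_left hda (mul_nonneg hγ.le hD)]

/-- The envy-free allocations with prices at least `t`, total rent at most `l + ε`, and room `a`
carrying its share of the increase form a compact set; at a point maximizing the total rent, the
local increase shows that this total is `l + ε`. -/
theorem exists_envyFree_sum_eq_add (hρ : ∀ i, 0 ≤ ρ i) (hρbar : ∀ i, ρ i ≤ ρbar) (a : α)
    {t : α → ℝ} {σ : Equiv.Perm α} (hσ : EnvyFree v ρ b t σ) {ε : ℝ} (hε : 0 < ε) :
    ∃ x ν, EnvyFree v ρ b x ν ∧ t ≤ x ∧ ∑ c, x c = ∑ c, t c + ε ∧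
      ε ≤ Fintype.card α * (1 + ρbar) ^ (Fintype.card α - 1) * (x a - t a) := by
  set C := (Fintype.card α : ℝ) * (1 + ρbar) ^ (Fintype.card α - 1) with hC
  set S : Set (α → ℝ) := {x | ∃ ν, EnvyFree v ρ b x ν} ∩ Set.Ici t ∩
    {x | ∑ c, x c ≤ ∑ c, t c + ε} ∩ {x | ∑ c, x c - ∑ c, t c ≤ C * (x a - t a)}
  have hclosed : IsClosed S :=
    ((isClosed_setOf_exists_envyFree.inter isClosed_Ici).inter
      (isClosed_le (by fun_prop) (by fun_prop))).inter (isClosed_le (by fun_prop) (by fun_prop))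
  have hbdd : S ⊆ Set.Icc t (t + fun _ => ε) := by
    rintro x ⟨⟨⟨-, htx⟩, hx : ∑ c, x c ≤ ∑ c, t c + ε⟩, -⟩
    refine ⟨htx, fun c => ?_⟩
    have := Finset.single_le_sum (f := x - t) (fun z _ => sub_nonneg.2 (htx z)) (Finset.mem_univ c)
    simp only [Pi.sub_apply, Finset.sum_sub_distrib] at this
    simp only [Pi.add_apply]
    linarith
  obtain ⟨x, ⟨⟨⟨⟨ν, hν⟩, htx⟩, hx_le : ∑ c, x c ≤ _⟩,
      hx_share : ∑ c, x c - ∑ c, t c ≤ C * (x a - t a)⟩, hx_max⟩ :=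
    (isCompact_Icc.of_isClosed_subset hclosed hbdd).exists_isMaxOn
      ⟨t, ⟨⟨⟨σ, hσ⟩, Set.mem_Ici.2 le_rfl⟩, by simp [hε.le]⟩, by simp⟩
      (by fun_prop : Continuous fun x : α → ℝ => ∑ c, x c).continuousOn
  rcases hx_le.eq_or_lt with heq | hlt
  · exact ⟨x, ν, hν, htx, heq, by linarith⟩
  obtain ⟨x', ν', hν', hxx', hlt', hle', hshare'⟩ :=
    exists_envyFree_local_increase hρ hρbar a hν (sub_pos.2 hlt)
  rw [← hC] at hshare'
  have hx'S : x' ∈ S :=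
    ⟨⟨⟨⟨ν', hν'⟩, htx.trans hxx'⟩, (by linarith : ∑ c, x' c ≤ ∑ c, t c + ε)⟩,
      (by linarith [mul_sub C (x' a) (x a), mul_sub C (x a) (t a), mul_sub C (x' a) (t a)] :
        ∑ c, x' c - ∑ c, t c ≤ C * (x' a - t a))⟩
  exact ((hx_max hx'S).not_gt hlt').elim

end Perturbation
end RentFlow

theorem stmt_11_general (n : ℕ) (ρbar : ℝ) :
    ∀ (mAg : ℕ), 0 < mAg → mAg ≤ n →
    ∀ (v : Fin mAg → Fin mAg → ℝ) (b ρ : Fin mAg → ℝ),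
    (∀ i, 0 ≤ b i) → (∀ i, 0 ≤ ρ i) → (∀ i, ρ i ≤ ρbar) →
    ∀ (u : Fin mAg → ℝ → Fin mAg → ℝ),
    (∀ i p c, u i p c = v i c - p - ρ i * max 0 (p - b i)) →
    ∀ (a : Fin mAg) (l ε : ℝ), 0 < ε →
    ∀ (t r : Fin mAg → ℝ) (σ μ : Equiv.Perm (Fin mAg)),
    (∑ c, t c = l) →
    (∀ i j : Fin mAg, u i (t (σ j)) (σ j) ≤ u i (t (σ i)) (σ i)) →
    (∀ (t' : Fin mAg → ℝ) (σ' : Equiv.Perm (Fin mAg)), (∑ c, t' c = l) →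
      (∀ i j : Fin mAg, u i (t' (σ' j)) (σ' j) ≤ u i (t' (σ' i)) (σ' i)) →
      t' a ≤ t a) →
    (∑ c, r c = l + ε) →
    (∀ i j : Fin mAg, u i (r (μ j)) (μ j) ≤ u i (r (μ i)) (μ i)) →
    (∀ (r' : Fin mAg → ℝ) (μ' : Equiv.Perm (Fin mAg)), (∑ c, r' c = l + ε) →
      (∀ i j : Fin mAg, u i (r' (μ' j)) (μ' j) ≤ u i (r' (μ' i)) (μ' i)) →
      r' a ≤ r a) →
    (∀ c, t c < r c) →
    (∀ j, u j (r (μ j)) (μ j) < u j (t (σ j)) (σ j)) →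
    (1 / ((n : ℝ) * (1 + ρbar) ^ (n ^ 2))) * ε ≤ r a - t a := by
  intro mAg hm hmn v b ρ _ hρ hρbar u hu a l ε hε t r σ μ htsum htEF _ _ _ hrmax _ _
  obtain rfl : u = RentFlow.utility v ρ b := by
    funext i p c
    rw [hu, RentFlow.utility, RentFlow.cost]
    ring
  obtain ⟨x, ν, hν, htx, hxsum, hx⟩ := RentFlow.exists_envyFree_sum_eq_add hρ hρbar a
    (fun i c => by simpa using htEF i (σ.symm c)) hε
  have hxr : x a ≤ r a := hrmax x ν (by rw [hxsum, htsum]) fun i j => hν i (ν j)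
  have hK : 1 ≤ 1 + ρbar := by linarith [hρ a, hρbar a]
  have hC : (mAg : ℝ) * (1 + ρbar) ^ (mAg - 1) ≤ n * (1 + ρbar) ^ (n ^ 2) :=
    mul_le_mul (by exact_mod_cast hmn)
      (pow_le_pow_right₀ hK ((Nat.sub_le _ _).trans (hmn.trans (Nat.le_self_pow two_ne_zero n))))
      (by positivity) (by positivity)
  have hn : (0 : ℝ) < n := by exact_mod_cast hm.trans_le hmn
  rw [Fintype.card_fin] at hx
  rw [one_div_mul_eq_div, div_le_iff₀ (by positivity), mul_comm]
  calc ε ≤ mAg * (1 + ρbar) ^ (mAg - 1) * (x a - t a) := hx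
    _ ≤ n * (1 + ρbar) ^ (n ^ 2) * (r a - t a) :=
      mul_le_mul hC (by linarith) (sub_nonneg.2 (htx a)) (by positivity)

/-- bounded rent flow: there is `θ = 1/(n(1+ρ̄)^{n²}) > 0`,
depending only on `n` and `ρ̄`, such that for any sub-economy with `m ≤ n`
agents and rooms, budget-constrained preferences with indices at most `ρ̄`, any
room `a`, and allocations maximizing the price of room `a` over the envy-free
sets at rents `l` and `l + ε` respectively, the price of room `a` rises by at
least `θ·ε`. (As allowed, the standard monotonicity facts — all prices rise
and all utilities fall as rent rises across these selections — appear as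
hypotheses.) -/
theorem stmt_11 (n : ℕ) (hn : 0 < n) (ρbar : ℝ) (hρbar : 0 ≤ ρbar) :
    ∀ (mAg : ℕ), 0 < mAg → mAg ≤ n →
    ∀ (v : Fin mAg → Fin mAg → ℝ) (b ρ : Fin mAg → ℝ),
    (∀ i, 0 ≤ b i) → (∀ i, 0 ≤ ρ i) → (∀ i, ρ i ≤ ρbar) →
    ∀ (u : Fin mAg → ℝ → Fin mAg → ℝ),
    (∀ i p c, u i p c = v i c - p - ρ i * max 0 (p - b i)) →
    ∀ (a : Fin mAg) (l ε : ℝ), 0 < ε →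
    ∀ (t r : Fin mAg → ℝ) (σ μ : Equiv.Perm (Fin mAg)),
    (∑ c, t c = l) →
    (∀ i j : Fin mAg, u i (t (σ j)) (σ j) ≤ u i (t (σ i)) (σ i)) →
    (∀ (t' : Fin mAg → ℝ) (σ' : Equiv.Perm (Fin mAg)), (∑ c, t' c = l) →
      (∀ i j : Fin mAg, u i (t' (σ' j)) (σ' j) ≤ u i (t' (σ' i)) (σ' i)) →
      t' a ≤ t a) →
    (∑ c, r c = l + ε) →
    (∀ i j : Fin mAg, u i (r (μ j)) (μ j) ≤ u i (r (μ i)) (μ i)) →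
    (∀ (r' : Fin mAg → ℝ) (μ' : Equiv.Perm (Fin mAg)), (∑ c, r' c = l + ε) →
      (∀ i j : Fin mAg, u i (r' (μ' j)) (μ' j) ≤ u i (r' (μ' i)) (μ' i)) →
      r' a ≤ r a) →
    (∀ c, t c < r c) →
    (∀ j, u j (r (μ j)) (μ j) < u j (t (σ j)) (σ j)) →
    (1 / ((n : ℝ) * (1 + ρbar) ^ (n ^ 2))) * ε ≤ r a - t a :=
  stmt_11_general n ρbar
end

section
/- Let u ∈ B(C)^M be budget-constrained quasi-linear with indices at most ρ̄, let (t, σ) and (r, μ) be envy-free allocations (for rents l and l + ε respectively) with r_b > t_b for all rooms b and u_j(t-bundle) > u_j(r-bundle) for all agents j. Then for each agent j: r_{μ(j)} − t_{μ(j)} ≤ (r_{σ(j)} − t_{σ(j)})·(1 + ρ̄). -/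
/-!
Compare agent `j`'s room `μ j` under `r` with the room `σ j` under `t`. Since every rent rises,
`r_{μ j} - t_{μ j}` is at most the utility `j` loses on `μ j`, because utilities fall at least
one-for-one in price. Envy-freeness of `(t, σ)` and of `(r, μ)` bounds this loss by the loss on
`σ j`, which is at most `(1 + ρ_j)(r_{σ j} - t_{σ j})` because the budget penalty
`ρ_j · max 0 (p - b_j)` grows at rate at most `ρ_j`.
-/

def budgetUtility (v b ρ p : ℝ) : ℝ := v - p - ρ * max 0 (p - b)

section budgetUtility

variable (v b : ℝ) {ρ p q : ℝ}

lemma budgetUtility_sub_budgetUtility :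
    budgetUtility v b ρ p - budgetUtility v b ρ q
      = (q - p) + ρ * (max 0 (q - b) - max 0 (p - b)) := by
  unfold budgetUtility
  ring

lemma sub_le_budgetUtility_sub (hρ : 0 ≤ ρ) (hpq : p ≤ q) :
    q - p ≤ budgetUtility v b ρ p - budgetUtility v b ρ q := by
  have hmono : max 0 (p - b) ≤ max 0 (q - b) := max_le_max le_rfl (by linarith)
  rw [budgetUtility_sub_budgetUtility]
  nlinarith

lemma budgetUtility_sub_le (hρ : 0 ≤ ρ) (hpq : p ≤ q) :
    budgetUtility v b ρ p - budgetUtility v b ρ q ≤ (1 + ρ) * (q - p) := by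
  have hlip : max 0 (q - b) - max 0 (p - b) ≤ q - p :=
    (le_abs_self _).trans <| by
      simpa [abs_of_nonneg (sub_nonneg.2 hpq), max_comm] using
        abs_max_sub_max_le_abs (q - b) (p - b) 0
  rw [budgetUtility_sub_budgetUtility]
  nlinarith

end budgetUtility

lemma utility_le_of_envyFree {ι β γ : Type*} [LE γ] {u : ι → β → ι → γ} {t : ι → β}
    {σ : Equiv.Perm ι} (hEF : ∀ j k, u j (t (σ k)) (σ k) ≤ u j (t (σ j)) (σ j)) (j c : ι) :
    u j (t c) c ≤ u j (t (σ j)) (σ j) := by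
  simpa using hEF j (σ.symm c)

theorem stmt_12_general (n : ℕ) (ρbar : ℝ)
    (v : Fin n → Fin n → ℝ) (b ρ : Fin n → ℝ)
    (hρ : ∀ j, 0 ≤ ρ j) (hρle : ∀ j, ρ j ≤ ρbar)
    (u : Fin n → ℝ → Fin n → ℝ)
    (hu : ∀ j p c, u j p c = v j c - p - ρ j * max 0 (p - b j))
    (t r : Fin n → ℝ) (σ μ : Equiv.Perm (Fin n))
    (hEFt : ∀ j k : Fin n, u j (t (σ k)) (σ k) ≤ u j (t (σ j)) (σ j))
    (hEFr : ∀ j k : Fin n, u j (r (μ k)) (μ k) ≤ u j (r (μ j)) (μ j))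
    (hrt : ∀ c, t c < r c) :
    ∀ j, r (μ j) - t (μ j) ≤ (r (σ j) - t (σ j)) * (1 + ρbar) := by
  intro j
  have hu' (p : ℝ) (c : Fin n) : u j p c = budgetUtility (v j c) (b j) (ρ j) p := hu j p c
  have ht := utility_le_of_envyFree hEFt j (μ j)
  have hr := utility_le_of_envyFree hEFr j (σ j)
  rw [hu', hu'] at ht hr
  calc r (μ j) - t (μ j)
      ≤ budgetUtility (v j (μ j)) (b j) (ρ j) (t (μ j))
          - budgetUtility (v j (μ j)) (b j) (ρ j) (r (μ j)) :=
        sub_le_budgetUtility_sub _ _ (hρ j) (hrt (μ j)).le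
    _ ≤ budgetUtility (v j (σ j)) (b j) (ρ j) (t (σ j))
          - budgetUtility (v j (σ j)) (b j) (ρ j) (r (σ j)) := by linarith
    _ ≤ (1 + ρ j) * (r (σ j) - t (σ j)) := budgetUtility_sub_le _ _ (hρ j) (hrt (σ j)).le
    _ ≤ (r (σ j) - t (σ j)) * (1 + ρbar) := by
        rw [mul_comm]
        exact mul_le_mul_of_nonneg_left (by linarith [hρle j]) (sub_nonneg.2 (hrt (σ j)).le)

/-- with budget-constrained preferences with indices at most
`ρ̄`, if `(t, σ)` and `(r, μ)` are envy-free (for rents `l` and `l + ε`) with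
`r_b > t_b` for all rooms and every agent strictly better off at `(t, σ)`,
then for each agent `j`:
`r_{μ(j)} − t_{μ(j)} ≤ (r_{σ(j)} − t_{σ(j)})·(1 + ρ̄)`. -/
theorem stmt_12 (n : ℕ) (ρbar : ℝ) (hρbar : 0 ≤ ρbar)
    (v : Fin n → Fin n → ℝ) (b ρ : Fin n → ℝ)
    (hb : ∀ j, 0 ≤ b j) (hρ : ∀ j, 0 ≤ ρ j) (hρle : ∀ j, ρ j ≤ ρbar)
    (u : Fin n → ℝ → Fin n → ℝ)
    (hu : ∀ j p c, u j p c = v j c - p - ρ j * max 0 (p - b j))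
    (l ε : ℝ) (hε : 0 < ε)
    (t r : Fin n → ℝ) (σ μ : Equiv.Perm (Fin n))
    (htsum : ∑ c, t c = l) (hrsum : ∑ c, r c = l + ε)
    (hEFt : ∀ j k : Fin n, u j (t (σ k)) (σ k) ≤ u j (t (σ j)) (σ j))
    (hEFr : ∀ j k : Fin n, u j (r (μ k)) (μ k) ≤ u j (r (μ j)) (μ j))
    (hrt : ∀ c, t c < r c)
    (hutil : ∀ j, u j (r (μ j)) (μ j) < u j (t (σ j)) (σ j)) :
    ∀ j, r (μ j) - t (μ j) ≤ (r (σ j) - t (σ j)) * (1 + ρbar) :=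
  stmt_12_general n ρbar v b ρ hρ hρle u hu t r σ μ hEFt hEFr hrt
end

section
/- Let Q ⊆ D ⊆ U and g an envy-free social choice function on D^N. Then for every true profile u ∈ U^N, every envy-free allocation z for u is a limit equilibrium outcome of the game (N, D^N, g, u): for every ε > 0 there is a quasi-linear report profile v^ε which is an ε-equilibrium and whose outcome g(v^ε) converges to z as ε → 0. -/
/-!
Let every agent `i` report the quasi-linear valuation that values each room `a` at `r a`, plus a
premium `δ` on its own room `μ i`. Summing the envy-freeness constraints of `g` at this profile,
the prices cancel, so every agent must get its premium room, i.e. the assignment is `μ`; then the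
prices lie within `δ` of `r`. If agent `i` deviates, the others' envy-freeness constraints and
`∑ p = m` still keep the price of the room `a` that `i` gets above `r a - δ`. As `u` is envy-free
at `(r, μ)`, continuity of `u i` bounds the gain from the deviation by `ε` once `δ` is small.
-/

/-- Quasi-linear utility functions over prices and `n` rooms. -/
def QLset (n : ℕ) : Set (ℝ → Fin n → ℝ) :=
  {f | ∃ w : Fin n → ℝ, ∀ p a, f p a = w a - p}

/-- Continuous, money-monotone utility functions satisfying the compensation
assumption. -/
def Uset (n : ℕ) : Set (ℝ → Fin n → ℝ) :=
  {f | (∀ a, Continuous fun p => f p a) ∧ (∀ a, StrictAnti fun p => f p a) ∧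
    ∀ a c : Fin n, ∀ p : ℝ, ∃ q : ℝ, f p a = f q c}

/-- Envy-freeness of the allocation `(r, σ)` for a utility profile. -/
def EnvyFree (n : ℕ) (u : Fin n → ℝ → Fin n → ℝ) (r : Fin n → ℝ)
    (σ : Equiv.Perm (Fin n)) : Prop :=
  ∀ i j : Fin n, u i (r (σ j)) (σ j) ≤ u i (r (σ i)) (σ i)

open Filter Topology Finset Function

theorem neg_le_of_sum_eq_zero_of_le_add {ι : Type*} [Fintype ι] {x : ι → ℝ}
    (hx : ∑ j, x j = 0) {i : ι} {d : ℝ} (h : ∀ j, x j ≤ x i + d) : -d ≤ x i := by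
  by_contra! hlt
  have : ∑ j, x j < ∑ _j : ι, (0 : ℝ) :=
    sum_lt_sum_of_nonempty ⟨i, mem_univ i⟩ fun j _ => by linarith [h j]
  simp [hx] at this

theorem exists_modulus_of_continuous {ι : Type*} [Finite ι] {f : ι → ℝ → ℝ}
    (hf : ∀ k, Continuous (f k)) (c : ι → ℝ) :
    ∃ δ : ℝ → ℝ, ∀ ε > 0, 0 < δ ε ∧ δ ε ≤ ε ∧
      ∀ k q, |q - c k| ≤ δ ε → |f k q - f k (c k)| ≤ ε := by
  have : ∀ ε, ∃ η, 0 < ε → 0 < η ∧ η ≤ ε ∧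
      ∀ k q, |q - c k| ≤ η → |f k q - f k (c k)| ≤ ε := by
    intro ε
    rcases le_or_gt ε 0 with hε | hε
    · exact ⟨0, fun h => absurd h hε.not_gt⟩
    have hev : ∀ᶠ q in 𝓝 (0 : ℝ), ∀ k, dist (f k (c k + q)) (f k (c k)) < ε :=
      eventually_all.2 fun k => by
        have : Tendsto (fun q => f k (c k + q)) (𝓝 0) (𝓝 (f k (c k))) := by
          simpa [comp_def] using ((hf k).comp (continuous_const_add (c k))).tendsto 0
        exact Metric.tendsto_nhds.1 this ε hε
    obtain ⟨η, hη, hball⟩ := Metric.eventually_nhds_iff.1 hev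
    refine ⟨min (η / 2) ε, fun _ => ⟨by positivity, min_le_right _ _, fun k q hq => ?_⟩⟩
    have hq' : dist (q - c k) 0 < η := by
      rw [Real.dist_eq, sub_zero]
      linarith [min_le_left (η / 2) ε]
    simpa [Real.dist_eq] using (hball hq' k).le
  choose δ hδ using this
  exact ⟨δ, hδ⟩

def bonusProfile {n : ℕ} (r : Fin n → ℝ) (d : ℝ) (μ : Equiv.Perm (Fin n)) :
    Fin n → ℝ → Fin n → ℝ :=
  fun i p a => r a + (if a = μ i then d else 0) - p

section BonusProfile

variable {n : ℕ} {r p : Fin n → ℝ} {d : ℝ} {μ σ : Equiv.Perm (Fin n)}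

theorem bonusProfile_mem_QLset (i : Fin n) : bonusProfile r d μ i ∈ QLset n :=
  ⟨fun a => r a + (if a = μ i then d else 0), fun _ _ => rfl⟩

theorem EnvyFree.perm_eq_of_bonusProfile (hd : 0 < d)
    (h : EnvyFree n (bonusProfile r d μ) p σ) : σ = μ := by
  by_contra hne
  obtain ⟨i₀, hi₀⟩ : ∃ i, σ i ≠ μ i := by simpa [Equiv.ext_iff] using hne
  set x : Fin n → ℝ := fun a => p a - r a
  have hgap : ∀ i, d - (if σ i = μ i then d else 0) ≤ x (μ i) - x (σ i) := fun i => by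
    have := h i (σ.symm (μ i))
    simp only [bonusProfile, Equiv.apply_symm_apply, if_true] at this
    simp only [x]
    linarith
  have hx : ∑ i, (x (μ i) - x (σ i)) = 0 := by
    rw [sum_sub_distrib, Equiv.sum_comp μ x, Equiv.sum_comp σ x, sub_self]
  have hpos : 0 < ∑ i, (d - if σ i = μ i then d else 0) :=
    sum_pos' (fun i _ => by split_ifs <;> linarith) ⟨i₀, mem_univ _, by simp [hi₀, hd]⟩
  linarith [sum_le_sum fun i (_ : i ∈ univ) => hgap i]

theorem EnvyFree.abs_sub_le_of_bonusProfile (hd : 0 ≤ d) (hp : ∑ a, p a = ∑ a, r a)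
    (h : EnvyFree n (bonusProfile r d μ) p μ) (a : Fin n) : |p a - r a| ≤ d := by
  set x : Fin n → ℝ := fun a => p a - r a
  have hx : ∑ a, x a = 0 := by simp [x, sum_sub_distrib, hp]
  have hle : ∀ a b, x a ≤ x b + d := fun a b => by
    have := h (μ.symm a) (μ.symm b)
    simp only [bonusProfile, Equiv.apply_symm_apply, if_true] at this
    simp only [x]
    split_ifs at this <;> linarith
  have hupper := neg_le_of_sum_eq_zero_of_le_add (x := -x) (by simp [hx])
    fun b => show -x b ≤ -x a + d by linarith [hle a b]
  exact abs_le.2 ⟨neg_le_of_sum_eq_zero_of_le_add hx fun b => hle b a, by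
    simp only [Pi.neg_apply] at hupper; linarith⟩

theorem EnvyFree.sub_le_of_update_bonusProfile (hd : 0 ≤ d) (hp : ∑ a, p a = ∑ a, r a)
    {i : Fin n} {w : ℝ → Fin n → ℝ} {τ : Equiv.Perm (Fin n)}
    (h : EnvyFree n (update (bonusProfile r d μ) i w) p τ) : r (τ i) - d ≤ p (τ i) := by
  set x : Fin n → ℝ := fun a => p a - r a
  have hx : ∑ j, x (τ j) = 0 := by
    rw [Equiv.sum_comp τ x]
    simp [x, sum_sub_distrib, hp]
  have hle : ∀ j, x (τ j) ≤ x (τ i) + d := by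
    intro j
    rcases eq_or_ne j i with rfl | hji
    · linarith
    · have := h j i
      simp only [update_of_ne hji, bonusProfile] at this
      simp only [x]
      split_ifs at this <;> linarith
  have := neg_le_of_sum_eq_zero_of_le_add hx hle
  simp only [x] at this
  linarith

theorem bonusProfile_deviation_utility_le {u : Fin n → ℝ → Fin n → ℝ}
    (hanti : ∀ i a, Antitone fun q => u i q a) (hEF : EnvyFree n u r μ) (hd : 0 ≤ d)
    {ε : ℝ} (hmod : ∀ i a q, |q - r a| ≤ d → |u i q a - u i (r a) a| ≤ ε)
    {p' : Fin n → ℝ} (hp' : ∀ a, |p' a - r a| ≤ d) (hp : ∑ a, p a = ∑ a, r a)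
    {i : Fin n} {w : ℝ → Fin n → ℝ} {τ : Equiv.Perm (Fin n)}
    (hτ : EnvyFree n (update (bonusProfile r d μ) i w) p τ) :
    u i (p (τ i)) (τ i) ≤ u i (p' (μ i)) (μ i) + 2 * ε :=
  calc u i (p (τ i)) (τ i)
      ≤ u i (r (τ i) - d) (τ i) := hanti i _ (hτ.sub_le_of_update_bonusProfile hd hp)
    _ ≤ u i (r (τ i)) (τ i) + ε := by
      have := hmod i (τ i) (r (τ i) - d) (by simp [abs_of_nonneg hd])
      linarith [(abs_le.1 this).2]
    _ ≤ u i (r (μ i)) (μ i) + ε := by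
      simpa using hEF i (μ.symm (τ i))
    _ ≤ u i (p' (μ i)) (μ i) + 2 * ε := by
      linarith [(abs_le.1 (hmod i (μ i) _ (hp' (μ i)))).1]

end BonusProfile

theorem stmt_15_general (n : ℕ) (m : ℝ)
    (D : Set (ℝ → Fin n → ℝ)) (hQD : QLset n ⊆ D)
    (g : (Fin n → (ℝ → Fin n → ℝ)) → (Fin n → ℝ) × Equiv.Perm (Fin n))
    (hg : ∀ vp : Fin n → (ℝ → Fin n → ℝ), (∀ k, vp k ∈ D) →
      (∑ a, (g vp).1 a = m) ∧ EnvyFree n vp (g vp).1 (g vp).2)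
    (u : Fin n → ℝ → Fin n → ℝ) (hu : ∀ i, u i ∈ Uset n)
    (r : Fin n → ℝ) (μ : Equiv.Perm (Fin n))
    (hsum : ∑ a, r a = m) (hEF : EnvyFree n u r μ) :
    ∃ V : ℝ → Fin n → (ℝ → Fin n → ℝ),
      (∀ ε : ℝ, 0 < ε →
        (∀ i, V ε i ∈ QLset n) ∧
        ∀ i : Fin n, ∀ w ∈ D,
          u i ((g (Function.update (V ε) i w)).1
                ((g (Function.update (V ε) i w)).2 i))
              ((g (Function.update (V ε) i w)).2 i) ≤
            u i ((g (V ε)).1 ((g (V ε)).2 i)) ((g (V ε)).2 i) + ε) ∧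
      Filter.Tendsto (fun ε => (g (V ε)).1)
        (nhdsWithin 0 (Set.Ioi (0:ℝ))) (nhds r) ∧
      (∀ᶠ ε in nhdsWithin 0 (Set.Ioi (0:ℝ)), (g (V ε)).2 = μ) := by
  obtain ⟨δ, hδ⟩ := exists_modulus_of_continuous (f := fun k : Fin n × Fin n => (u k.1 · k.2))
    (fun k => (hu k.1).1 k.2) (fun k => r k.2)
  let V ε := bonusProfile r (δ (ε / 2)) μ
  have hVD : ∀ ε k, V ε k ∈ D := fun _ _ => hQD (bonusProfile_mem_QLset _)
  have hout : ∀ ε > 0, (g (V ε)).2 = μ ∧ ∀ a, |(g (V ε)).1 a - r a| ≤ δ (ε / 2) := by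
    intro ε hε
    obtain ⟨hpos, -⟩ := hδ (ε / 2) (half_pos hε)
    obtain ⟨hpsum, hpEF⟩ := hg _ (hVD ε)
    have hσ := hpEF.perm_eq_of_bonusProfile hpos
    exact ⟨hσ, (hσ ▸ hpEF).abs_sub_le_of_bonusProfile hpos.le (hpsum.trans hsum.symm)⟩
  refine ⟨V, fun ε hε => ⟨fun _ => bonusProfile_mem_QLset _, fun i w hw => ?_⟩, ?_, ?_⟩
  · obtain ⟨hpos, -, hmod⟩ := hδ (ε / 2) (half_pos hε)
    obtain ⟨hσ, hp'⟩ := hout ε hε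
    obtain ⟨hpsum, hpEF⟩ := hg (update (V ε) i w)
      (forall_update_iff _ (p := fun _ v => v ∈ D) |>.2 ⟨hw, fun k _ => hVD ε k⟩)
    rw [hσ]
    refine (bonusProfile_deviation_utility_le (fun i a => ((hu i).2.1 a).antitone) hEF hpos.le
      (fun i a => hmod (i, a)) hp' (hpsum.trans hsum.symm) hpEF).trans_eq ?_
    ring
  · rw [tendsto_iff_dist_tendsto_zero]
    refine squeeze_zero' (Eventually.of_forall fun _ => dist_nonneg) ?_
      (tendsto_nhdsWithin_of_tendsto_nhds tendsto_id)
    filter_upwards [self_mem_nhdsWithin] with ε (hε : 0 < ε)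
    refine (dist_pi_le_iff hε.le).2 fun a => ?_
    rw [Real.dist_eq]
    linarith [(hout ε hε).2 a, (hδ (ε / 2) (half_pos hε)).2.1]
  · filter_upwards [self_mem_nhdsWithin] with ε hε using (hout ε hε).1

/-- let `Q ⊆ D ⊆ U` and `g` an envy-free scf on `D^N`. Every
envy-free allocation `z = (r, μ)` for the true profile `u` is a limit
equilibrium outcome of `(N, D^N, g, u)`: there are quasi-linear report profiles
`V ε`, each an `ε`-equilibrium, whose outcomes converge to `z` as `ε → 0⁺`. -/
theorem stmt_15 (n : ℕ) (m : ℝ)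
    (D : Set (ℝ → Fin n → ℝ)) (hQD : QLset n ⊆ D) (hDU : D ⊆ Uset n)
    (g : (Fin n → (ℝ → Fin n → ℝ)) → (Fin n → ℝ) × Equiv.Perm (Fin n))
    (hg : ∀ vp : Fin n → (ℝ → Fin n → ℝ), (∀ k, vp k ∈ D) →
      (∑ a, (g vp).1 a = m) ∧ EnvyFree n vp (g vp).1 (g vp).2)
    (u : Fin n → ℝ → Fin n → ℝ) (hu : ∀ i, u i ∈ Uset n)
    (r : Fin n → ℝ) (μ : Equiv.Perm (Fin n))
    (hsum : ∑ a, r a = m) (hEF : EnvyFree n u r μ) :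
    ∃ V : ℝ → Fin n → (ℝ → Fin n → ℝ),
      (∀ ε : ℝ, 0 < ε →
        (∀ i, V ε i ∈ QLset n) ∧
        ∀ i : Fin n, ∀ w ∈ D,
          u i ((g (Function.update (V ε) i w)).1
                ((g (Function.update (V ε) i w)).2 i))
              ((g (Function.update (V ε) i w)).2 i) ≤
            u i ((g (V ε)).1 ((g (V ε)).2 i)) ((g (V ε)).2 i) + ε) ∧
      Filter.Tendsto (fun ε => (g (V ε)).1)
        (nhdsWithin 0 (Set.Ioi (0:ℝ))) (nhds r) ∧
      (∀ᶠ ε in nhdsWithin 0 (Set.Ioi (0:ℝ)), (g (V ε)).2 = μ) :=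
  stmt_15_general n m D hQD g hg u hu r μ hsum hEF
end
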